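/- For any graph G and real α ≤ 1/2 with α ≠ 0, δ^(−2α+1)·Δ^(−1)·R_α(G) ≤ GA₁(G) ≤ Δ^(−2α+1)·δ^(−1)·R_α(G), with each equality if and only if G is regular. -/

import Mathlib

open Finset Real

variable {V : Type*}

noncomputable def edgeSum (G : SimpleGraph V) [Fintype V] [DecidableRel G.Adj]
    (f : ℝ → ℝ → ℝ) (hf : ∀ a b, f a b = f b a) : ℝ :=
  ∑ e ∈ G.edgeFinset,
    Sym2.lift ⟨fun u v => f (G.degree u) (G.degree v), fun u v => hf _ _⟩ e

noncomputable def GA1 (G : SimpleGraph V) [Fintype V] [DecidableRel G.Adj] : ℝ :=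
  edgeSum G (fun x y => 2 * Real.sqrt (x * y) / (x + y))
    (fun a b => by (try dsimp only); rw [mul_comm a b, add_comm a b])

noncomputable def M1 (G : SimpleGraph V) [Fintype V] [DecidableRel G.Adj] : ℝ :=
  ∑ u : V, (G.degree u : ℝ) ^ 2

noncomputable def M2 (G : SimpleGraph V) [Fintype V] [DecidableRel G.Adj] : ℝ :=
  edgeSum G (fun x y => x * y) (fun a b => mul_comm a b)

noncomputable def randic (G : SimpleGraph V) [Fintype V] [DecidableRel G.Adj] : ℝ :=
  edgeSum G (fun x y => 1 / Real.sqrt (x * y)) (fun a b => by (try dsimp only); rw [mul_comm a b])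

noncomputable def genRandic (G : SimpleGraph V) [Fintype V] [DecidableRel G.Adj] (α : ℝ) : ℝ :=
  edgeSum G (fun x y => (x * y) ^ α) (fun a b => by (try dsimp only); rw [mul_comm a b])

noncomputable def modZagreb (G : SimpleGraph V) [Fintype V] [DecidableRel G.Adj] : ℝ :=
  edgeSum G (fun x y => 1 / (x * y)) (fun a b => by (try dsimp only); rw [mul_comm a b])

noncomputable def NKstar (G : SimpleGraph V) [Fintype V] [DecidableRel G.Adj] : ℝ :=
  ∏ e ∈ G.edgeFinset,
    Sym2.lift ⟨fun u v => ((G.degree u : ℝ) * (G.degree v : ℝ)), fun u v => mul_comm _ _⟩ e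

def GraphRegular (G : SimpleGraph V) [Fintype V] [DecidableRel G.Adj] : Prop :=
  ∃ k, G.IsRegularOfDegree k

/-! Edge by edge, `2√(xy)/(x+y) = (xy)^(1/2-α) · 2/(x+y) · (xy)^α`. For `α ≤ 1/2` and
`δ ≤ x, y ≤ Δ` the first factor lies between `δ^(1-2α)` and `Δ^(1-2α)` and the second
between `1/Δ` and `1/δ`; summing over the edges gives both bounds. Without isolated vertices,
a vertex of degree `< Δ` (resp. `> δ`) has an edge, on which the lower (resp. upper) bound is
strict; in a `k`-regular graph every edge term attains both bounds. -/

section EdgeTerm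

variable {δ Δ x y α : ℝ}

lemma two_mul_sqrt_div_add_eq (α : ℝ) (hx : 0 < x) (hy : 0 < y) :
    2 * √(x * y) / (x + y) = (x * y) ^ (1 / 2 - α) * (2 / (x + y)) * (x * y) ^ α := by
  rw [mul_right_comm, ← rpow_add (by positivity), sub_add_cancel, ← sqrt_eq_rpow]
  ring

lemma rpow_neg_two_mul_add_one_eq (α : ℝ) (hδ : 0 ≤ δ) :
    δ ^ (-(2 * α) + 1) = (δ * δ) ^ (1 / 2 - α) := by
  rw [← sq, ← rpow_natCast, ← rpow_mul hδ]
  congr 1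
  ring

lemma rpow_neg_two_mul_add_one_le_rpow (hα : α ≤ 1 / 2) (hδ : 0 ≤ δ)
    (hx : δ ≤ x) (hy : δ ≤ y) : δ ^ (-(2 * α) + 1) ≤ (x * y) ^ (1 / 2 - α) := by
  rw [rpow_neg_two_mul_add_one_eq α hδ]
  gcongr
  linarith

lemma rpow_le_rpow_neg_two_mul_add_one (hα : α ≤ 1 / 2) (hx₀ : 0 ≤ x) (hy₀ : 0 ≤ y)
    (hx : x ≤ Δ) (hy : y ≤ Δ) : (x * y) ^ (1 / 2 - α) ≤ Δ ^ (-(2 * α) + 1) := by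
  rw [rpow_neg_two_mul_add_one_eq α (hx₀.trans hx)]
  gcongr
  linarith

lemma le_two_mul_sqrt_div_add (hα : α ≤ 1 / 2) (hδ : 0 < δ)
    (hδx : δ ≤ x) (hxΔ : x ≤ Δ) (hδy : δ ≤ y) (hyΔ : y ≤ Δ) :
    δ ^ (-(2 * α) + 1) * Δ⁻¹ * (x * y) ^ α ≤ 2 * √(x * y) / (x + y) := by
  have hxy : 0 < x * y := mul_pos (by linarith) (by linarith)
  have hinv : Δ⁻¹ ≤ 2 / (x + y) := by
    rw [inv_eq_one_div, div_le_div_iff₀ (by linarith) (by linarith)]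
    linarith
  rw [two_mul_sqrt_div_add_eq α (by linarith) (by linarith)]
  exact mul_le_mul_of_nonneg_right
    (mul_le_mul (rpow_neg_two_mul_add_one_le_rpow hα hδ.le hδx hδy) hinv
      (inv_nonneg.2 (by linarith)) (rpow_nonneg hxy.le _)) (rpow_nonneg hxy.le _)

lemma lt_two_mul_sqrt_div_add (hα : α ≤ 1 / 2) (hδ : 0 < δ)
    (hδx : δ ≤ x) (hxΔ : x < Δ) (hδy : δ ≤ y) (hyΔ : y ≤ Δ) :
    δ ^ (-(2 * α) + 1) * Δ⁻¹ * (x * y) ^ α < 2 * √(x * y) / (x + y) := by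
  have hxy : 0 < x * y := mul_pos (by linarith) (by linarith)
  have hinv : Δ⁻¹ < 2 / (x + y) := by
    rw [inv_eq_one_div, div_lt_div_iff₀ (by linarith) (by linarith)]
    linarith
  rw [two_mul_sqrt_div_add_eq α (by linarith) (by linarith)]
  exact mul_lt_mul_of_pos_right
    (mul_lt_mul' (rpow_neg_two_mul_add_one_le_rpow hα hδ.le hδx hδy) hinv
      (inv_nonneg.2 (by linarith)) (rpow_pos_of_pos hxy _)) (rpow_pos_of_pos hxy _)

lemma two_mul_sqrt_div_add_le (hα : α ≤ 1 / 2) (hδ : 0 < δ)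
    (hδx : δ ≤ x) (hxΔ : x ≤ Δ) (hδy : δ ≤ y) (hyΔ : y ≤ Δ) :
    2 * √(x * y) / (x + y) ≤ Δ ^ (-(2 * α) + 1) * δ⁻¹ * (x * y) ^ α := by
  have hxy : 0 < x * y := mul_pos (by linarith) (by linarith)
  have hinv : 2 / (x + y) ≤ δ⁻¹ := by
    rw [inv_eq_one_div, div_le_div_iff₀ (by linarith) hδ]
    linarith
  rw [two_mul_sqrt_div_add_eq α (by linarith) (by linarith)]
  exact mul_le_mul_of_nonneg_right
    (mul_le_mul (rpow_le_rpow_neg_two_mul_add_one hα (by linarith) (by linarith) hxΔ hyΔ) hinv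
      (div_nonneg zero_le_two (by linarith)) (rpow_nonneg (by linarith) _))
    (rpow_nonneg hxy.le _)

lemma two_mul_sqrt_div_add_lt (hα : α ≤ 1 / 2) (hδ : 0 < δ)
    (hδx : δ < x) (hxΔ : x ≤ Δ) (hδy : δ ≤ y) (hyΔ : y ≤ Δ) :
    2 * √(x * y) / (x + y) < Δ ^ (-(2 * α) + 1) * δ⁻¹ * (x * y) ^ α := by
  have hxy : 0 < x * y := mul_pos (by linarith) (by linarith)
  have hinv : 2 / (x + y) < δ⁻¹ := by
    rw [inv_eq_one_div, div_lt_div_iff₀ (by linarith) hδ]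
    linarith
  rw [two_mul_sqrt_div_add_eq α (by linarith) (by linarith)]
  exact mul_lt_mul_of_pos_right
    (mul_lt_mul' (rpow_le_rpow_neg_two_mul_add_one hα (by linarith) (by linarith) hxΔ hyΔ) hinv
      (div_nonneg zero_le_two (by linarith)) (rpow_pos_of_pos (by linarith) _))
    (rpow_pos_of_pos hxy _)

lemma two_mul_sqrt_mul_self_div_add_self {k : ℝ} (hk : 0 < k) :
    2 * √(k * k) / (k + k) = k ^ (-(2 * α) + 1) * k⁻¹ * (k * k) ^ α := by
  rw [two_mul_sqrt_div_add_eq α hk hk, rpow_neg_two_mul_add_one_eq α hk.le, ← two_mul,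
    div_mul_cancel_left₀ two_ne_zero]

end EdgeTerm

section EdgeSum

variable {G : SimpleGraph V} [Fintype V] [DecidableRel G.Adj] {f g : ℝ → ℝ → ℝ}
  {hf : ∀ a b, f a b = f b a} {hg : ∀ a b, g a b = g b a}

lemma mul_edgeSum (c : ℝ) :
    c * edgeSum G f hf = edgeSum G (fun a b => c * f a b) (fun a b => by rw [hf]) := by
  rw [edgeSum, edgeSum, mul_sum]
  refine sum_congr rfl fun e _ => ?_
  induction e using Sym2.ind
  rfl

lemma edgeSum_le_edgeSum
    (h : ∀ u v, G.Adj u v → f (G.degree u) (G.degree v) ≤ g (G.degree u) (G.degree v)) :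
    edgeSum G f hf ≤ edgeSum G g hg :=
  sum_le_sum fun e he => by
    induction e using Sym2.ind with
    | _ u v => exact h u v (G.mem_edgeFinset.1 he)

lemma edgeSum_lt_edgeSum
    (h : ∀ u v, G.Adj u v → f (G.degree u) (G.degree v) ≤ g (G.degree u) (G.degree v))
    {u v : V} (huv : G.Adj u v)
    (hlt : f (G.degree u) (G.degree v) < g (G.degree u) (G.degree v)) :
    edgeSum G f hf < edgeSum G g hg :=
  sum_lt_sum (fun e he => by
    induction e using Sym2.ind with
    | _ u v => exact h u v (G.mem_edgeFinset.1 he)) ⟨s(u, v), G.mem_edgeFinset.2 huv, hlt⟩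

lemma edgeSum_congr
    (h : ∀ u v, G.Adj u v → f (G.degree u) (G.degree v) = g (G.degree u) (G.degree v)) :
    edgeSum G f hf = edgeSum G g hg :=
  sum_congr rfl fun e he => by
    induction e using Sym2.ind with
    | _ u v => exact h u v (G.mem_edgeFinset.1 he)

end EdgeSum

section GA1

variable {G : SimpleGraph V} [Fintype V] [DecidableRel G.Adj] {α : ℝ}

lemma cast_minDegree_le_degree (v : V) : (G.minDegree : ℝ) ≤ G.degree v :=
  Nat.cast_le.2 (G.minDegree_le_degree v)

lemma cast_degree_le_maxDegree (v : V) : (G.degree v : ℝ) ≤ G.maxDegree :=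
  Nat.cast_le.2 (G.degree_le_maxDegree v)

lemma minDegree_rpow_mul_le_GA1 (hα : α ≤ 1 / 2) (hδ : 0 < G.minDegree) :
    (G.minDegree : ℝ) ^ (-(2 * α) + 1) * (G.maxDegree : ℝ)⁻¹ * genRandic G α ≤
      GA1 G := by
  rw [genRandic, mul_edgeSum, GA1]
  exact edgeSum_le_edgeSum fun u v _ => le_two_mul_sqrt_div_add hα
    (Nat.cast_pos.2 hδ) (cast_minDegree_le_degree u) (cast_degree_le_maxDegree u)
    (cast_minDegree_le_degree v) (cast_degree_le_maxDegree v)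

lemma GA1_le_maxDegree_rpow_mul (hα : α ≤ 1 / 2) (hδ : 0 < G.minDegree) :
    GA1 G ≤
      (G.maxDegree : ℝ) ^ (-(2 * α) + 1) * (G.minDegree : ℝ)⁻¹ * genRandic G α := by
  rw [genRandic, mul_edgeSum, GA1]
  exact edgeSum_le_edgeSum fun u v _ => two_mul_sqrt_div_add_le hα
    (Nat.cast_pos.2 hδ) (cast_minDegree_le_degree u) (cast_degree_le_maxDegree u)
    (cast_minDegree_le_degree v) (cast_degree_le_maxDegree v)

lemma exists_adj_of_minDegree_pos (hδ : 0 < G.minDegree) (v : V) : ∃ w, G.Adj v w :=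
  (G.degree_pos_iff_exists_adj v).1 (hδ.trans_le (G.minDegree_le_degree v))

lemma minDegree_rpow_mul_lt_GA1 (hα : α ≤ 1 / 2) (hδ : 0 < G.minDegree)
    {v : V} (hv : G.degree v < G.maxDegree) :
    (G.minDegree : ℝ) ^ (-(2 * α) + 1) * (G.maxDegree : ℝ)⁻¹ * genRandic G α < GA1 G := by
  obtain ⟨w, hvw⟩ := exists_adj_of_minDegree_pos hδ v
  rw [genRandic, mul_edgeSum, GA1]
  refine edgeSum_lt_edgeSum (fun u v _ => le_two_mul_sqrt_div_add hα
    (Nat.cast_pos.2 hδ) (cast_minDegree_le_degree u) (cast_degree_le_maxDegree u)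
    (cast_minDegree_le_degree v) (cast_degree_le_maxDegree v)) hvw ?_
  exact lt_two_mul_sqrt_div_add hα (Nat.cast_pos.2 hδ) (cast_minDegree_le_degree v)
    (Nat.cast_lt.2 hv) (cast_minDegree_le_degree w) (cast_degree_le_maxDegree w)

lemma GA1_lt_maxDegree_rpow_mul (hα : α ≤ 1 / 2) (hδ : 0 < G.minDegree)
    {v : V} (hv : G.minDegree < G.degree v) :
    GA1 G < (G.maxDegree : ℝ) ^ (-(2 * α) + 1) * (G.minDegree : ℝ)⁻¹ * genRandic G α := by
  obtain ⟨w, hvw⟩ := exists_adj_of_minDegree_pos hδ v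
  rw [genRandic, mul_edgeSum, GA1]
  refine edgeSum_lt_edgeSum (fun u v _ => two_mul_sqrt_div_add_le hα
    (Nat.cast_pos.2 hδ) (cast_minDegree_le_degree u) (cast_degree_le_maxDegree u)
    (cast_minDegree_le_degree v) (cast_degree_le_maxDegree v)) hvw ?_
  exact two_mul_sqrt_div_add_lt hα (Nat.cast_pos.2 hδ) (Nat.cast_lt.2 hv)
    (cast_degree_le_maxDegree v) (cast_minDegree_le_degree w) (cast_degree_le_maxDegree w)

lemma SimpleGraph.IsRegularOfDegree.GA1_eq {k : ℕ} (hk : G.IsRegularOfDegree k)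
    (hk₀ : 0 < k) :
    GA1 G = (k : ℝ) ^ (-(2 * α) + 1) * (k : ℝ)⁻¹ * genRandic G α := by
  rw [genRandic, mul_edgeSum, GA1]
  refine edgeSum_congr fun u v _ => ?_
  rw [hk.degree_eq u, hk.degree_eq v]
  exact two_mul_sqrt_mul_self_div_add_self (Nat.cast_pos.2 hk₀)

lemma GA1_eq_minDegree_rpow_mul_iff [Nonempty V] (hα : α ≤ 1 / 2)
    (hδ : 0 < G.minDegree) :
    GA1 G = (G.minDegree : ℝ) ^ (-(2 * α) + 1) * (G.maxDegree : ℝ)⁻¹ * genRandic G α ↔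
      GraphRegular G := by
  refine ⟨fun h => ?_, fun ⟨k, hk⟩ => ?_⟩
  · by_contra hreg
    obtain ⟨v, hv⟩ : ∃ v, G.degree v < G.maxDegree := by
      by_contra! hv
      exact hreg ⟨_, fun v => (G.degree_le_maxDegree v).antisymm (hv v)⟩
    exact (minDegree_rpow_mul_lt_GA1 hα hδ hv).ne' h
  · rw [hk.minDegree_eq] at hδ ⊢
    rw [hk.maxDegree_eq]
    exact hk.GA1_eq hδ

lemma GA1_eq_maxDegree_rpow_mul_iff [Nonempty V] (hα : α ≤ 1 / 2)
    (hδ : 0 < G.minDegree) :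
    GA1 G = (G.maxDegree : ℝ) ^ (-(2 * α) + 1) * (G.minDegree : ℝ)⁻¹ * genRandic G α ↔
      GraphRegular G := by
  refine ⟨fun h => ?_, fun ⟨k, hk⟩ => ?_⟩
  · by_contra hreg
    obtain ⟨v, hv⟩ : ∃ v, G.minDegree < G.degree v := by
      by_contra! hv
      exact hreg ⟨_, fun v => (hv v).antisymm (G.minDegree_le_degree v)⟩
    exact (GA1_lt_maxDegree_rpow_mul hα hδ hv).ne h
  · rw [hk.minDegree_eq] at hδ ⊢
    rw [hk.maxDegree_eq]
    exact hk.GA1_eq hδ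

end GA1

theorem stmt14_general (G : SimpleGraph V) [Fintype V] [DecidableRel G.Adj]
    (hc : G.Connected) (hm : G.edgeFinset.Nonempty) (α : ℝ) (hα : α ≤ 1/2) :
    (G.minDegree : ℝ) ^ (-(2 * α) + 1) * (G.maxDegree : ℝ)⁻¹ * genRandic G α ≤ GA1 G ∧
    GA1 G ≤ (G.maxDegree : ℝ) ^ (-(2 * α) + 1) * (G.minDegree : ℝ)⁻¹ * genRandic G α ∧
    (GA1 G = (G.minDegree : ℝ) ^ (-(2 * α) + 1) * (G.maxDegree : ℝ)⁻¹ * genRandic G α ↔ GraphRegular G) ∧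
    (GA1 G = (G.maxDegree : ℝ) ^ (-(2 * α) + 1) * (G.minDegree : ℝ)⁻¹ * genRandic G α ↔ GraphRegular G) := by
  have : Nontrivial V := by
    obtain ⟨e, he⟩ := hm
    induction e using Sym2.ind with
    | _ u v => exact ⟨u, v, (G.mem_edgeFinset.1 he).ne⟩
  have hδ := hc.preconnected.minDegree_pos_of_nontrivial
  exact ⟨minDegree_rpow_mul_le_GA1 hα hδ, GA1_le_maxDegree_rpow_mul hα hδ,
    GA1_eq_minDegree_rpow_mul_iff hα hδ, GA1_eq_maxDegree_rpow_mul_iff hα hδ⟩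

theorem stmt14 (G : SimpleGraph V) [Fintype V] [DecidableRel G.Adj]
    (hc : G.Connected) (hm : G.edgeFinset.Nonempty) (α : ℝ) (hα : α ≤ 1/2) (hα0 : α ≠ 0) :
    (G.minDegree : ℝ) ^ (-(2 * α) + 1) * (G.maxDegree : ℝ)⁻¹ * genRandic G α ≤ GA1 G ∧
    GA1 G ≤ (G.maxDegree : ℝ) ^ (-(2 * α) + 1) * (G.minDegree : ℝ)⁻¹ * genRandic G α ∧
    (GA1 G = (G.minDegree : ℝ) ^ (-(2 * α) + 1) * (G.maxDegree : ℝ)⁻¹ * genRandic G α ↔ GraphRegular G) ∧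
    (GA1 G = (G.maxDegree : ℝ) ^ (-(2 * α) + 1) * (G.minDegree : ℝ)⁻¹ * genRandic G α ↔ GraphRegular G) :=
  stmt14_general G hc hm α hα
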